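/- arXiv:2111.07202 — 3 statements merged into one kernel-verified Lean document; each statement's English description precedes it below -/
import Mathlib

section
/- Let R be a commutative ring and let 𝔭 and 𝔮 be two distinct minimal prime ideals of R. Then the tensor product R_𝔭 ⊗_R R_𝔮 of the localizations of R at 𝔭 and at 𝔮 is the zero ring (i.e., it is a subsingleton). -/
/-- Let `R` be a commutative ring and let `𝔭` and `𝔮` be two distinct
minimal prime ideals of `R`. Then the tensor product `R_𝔭 ⊗[R] R_𝔮` of the localizations
of `R` at `𝔭` and at `𝔮` is the zero ring (a subsingleton). -/
theorem localization_tensor_localization_subsingleton_of_distinct_minimal_primes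
    (R : Type*) [CommRing R] (p q : Ideal R) [p.IsPrime] [q.IsPrime]
    (hp : p ∈ minimalPrimes R) (hq : q ∈ minimalPrimes R) (hpq : p ≠ q) :
    Subsingleton (TensorProduct R (Localization.AtPrime p) (Localization.AtPrime q)) := by
  by_contra h
  rw [not_subsingleton_iff_nontrivial] at h
  set T := TensorProduct R (Localization.AtPrime p) (Localization.AtPrime q)
  obtain ⟨P, hPmax⟩ := Ideal.exists_maximal T
  haveI := hPmax.isPrime
  set I := P.comap (algebraMap R T) with hI
  have hIprime : I.IsPrime := Ideal.IsPrime.comap _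
  have hIp : I ≤ p := by
    intro x hx
    by_contra hxp
    have hu : IsUnit (algebraMap R (Localization.AtPrime p) x) :=
      IsLocalization.map_units (Localization.AtPrime p) (⟨x, hxp⟩ : p.primeCompl)
    have hu2 : IsUnit (algebraMap R T x) := by
      have := hu.map (Algebra.TensorProduct.includeLeft :
        Localization.AtPrime p →ₐ[R] T)
      rwa [AlgHom.commutes] at this
    exact hPmax.ne_top (Ideal.eq_top_of_isUnit_mem _ hx hu2)
  have hIq : I ≤ q := by
    intro x hx
    by_contra hxq
    have hu : IsUnit (algebraMap R (Localization.AtPrime q) x) :=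
      IsLocalization.map_units (Localization.AtPrime q) (⟨x, hxq⟩ : q.primeCompl)
    have hu2 : IsUnit (algebraMap R T x) := by
      have := hu.map (Algebra.TensorProduct.includeRight :
        Localization.AtPrime q →ₐ[R] T)
      rwa [AlgHom.commutes] at this
    exact hPmax.ne_top (Ideal.eq_top_of_isUnit_mem _ hx hu2)
  have hpI : p = I := le_antisymm (hp.2 ⟨hIprime, bot_le⟩ hIp) hIp
  have hqI : q = I := le_antisymm (hq.2 ⟨hIprime, bot_le⟩ hIq) hIq
  exact hpq (hpI.trans hqI.symm)
end

section
/- Let R be a Dedekind domain which is not a field, and let K be its fraction field. Then the canonical K-algebra homomorphism K ⊗_R (∏_v O_v) → 𝔸_{R,K}, induced by the diagonal embedding K → 𝔸_{R,K} and the inclusion ∏_v O_v → 𝔸_{R,K} of the full product of integer rings (where v ranges over the height-one primes of R), is an isomorphism. (This is the one-dimensional affine instance of the isomorphism A(n) ⊗_𝒪 A(i_0,…,i_r) ≅ A(n,i_0,…,i_r) of Beilinson adele rings: here A(1) = K, A(0) = ∏_v O_v, and A(01) = 𝔸_{R,K}.) -/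
/-!
The inclusion `∏_v O_v → 𝔸_{R,K}` is injective, and every finite adele becomes integral after
multiplication by a nonzero element of `R`: only finitely many components are non-integral, and
each of them is cleared by some nonzero element of `R`. Hence `𝔸_{R,K}` is the localization of
the `R`-module `∏_v O_v` at `R ∖ {0}`, and such a localization is the base change to `K`.
-/

open IsDedekindDomain

namespace DedekindDomain

/-- The product of all `adicCompletionIntegers`, where `v` runs over the maximal ideals of `R`
(the definition `DedekindDomain.FiniteIntegralAdeles` of older Mathlib). -/
def FiniteIntegralAdeles (R K : Type*) [CommRing R] [IsDedekindDomain R] [Field K]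
    [Algebra R K] [IsFractionRing R K] : Type _ :=
  ∀ v : HeightOneSpectrum R, v.adicCompletionIntegers K

noncomputable instance (R K : Type*) [CommRing R] [IsDedekindDomain R] [Field K]
    [Algebra R K] [IsFractionRing R K] : CommRing (FiniteIntegralAdeles R K) :=
  Pi.commRing

noncomputable instance (R K : Type*) [CommRing R] [IsDedekindDomain R] [Field K]
    [Algebra R K] [IsFractionRing R K] : Algebra R (FiniteIntegralAdeles R K) :=
  Pi.algebra _ _

/-- The inclusion of the integral adeles into the finite adele ring. -/
noncomputable instance (R K : Type*) [CommRing R] [IsDedekindDomain R] [Field K]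
    [Algebra R K] [IsFractionRing R K] :
    Algebra (FiniteIntegralAdeles R K) (FiniteAdeleRing R K) :=
  RingHom.toAlgebra
    { toFun := fun x => RestrictedProduct.structureMap _ _ _ x
      map_one' := rfl
      map_mul' := fun _ _ => rfl
      map_zero' := rfl
      map_add' := fun _ _ => rfl }

end DedekindDomain

open DedekindDomain

/-- The inclusion `∏_v O_v → 𝔸_{R,K}` of the full product of the rings of integral adeles
into the finite adele ring, as a homomorphism of `R`-algebras. -/
noncomputable def finiteIntegralAdelesInclusion
    (R K : Type*) [CommRing R] [IsDedekindDomain R] [Field K] [Algebra R K]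
    [IsFractionRing R K] : FiniteIntegralAdeles R K →ₐ[R] FiniteAdeleRing R K :=
  { algebraMap (FiniteIntegralAdeles R K) (FiniteAdeleRing R K) with
    commutes' := fun _ => rfl }

open scoped nonZeroDivisors

theorem IsLocalizedModule.of_injective_of_exists_smul_mem_range {R : Type*} [CommSemiring R]
    (S : Submonoid R) (A : Type*) [CommSemiring A] [Algebra R A] [IsLocalization S A]
    {M N : Type*} [AddCommMonoid M] [Module R M] [AddCommMonoid N] [Module R N] [Module A N]
    [IsScalarTower R A N] (f : M →ₗ[R] N) (hf : Function.Injective f)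
    (h : ∀ n, ∃ s : S, s • n ∈ LinearMap.range f) : IsLocalizedModule S f where
  map_units s := by
    rw [← (Algebra.lsmul R (A := A) R N).commutes]
    exact (IsLocalization.map_units A s).map _
  surj n := by
    obtain ⟨s, m, hm⟩ := h n
    exact ⟨(m, s), hm.symm⟩
  exists_of_eq e := ⟨1, by rw [hf e]⟩

section

variable (R K : Type*) [CommRing R] [IsDedekindDomain R] [Field K] [Algebra R K]
  [IsFractionRing R K]

theorem finiteIntegralAdelesInclusion_injective :
    Function.Injective (finiteIntegralAdelesInclusion R K) :=
  fun _ _ h => funext fun v => Subtype.ext (congrArg (fun a : FiniteAdeleRing R K => a v) h)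

variable {R K} in
theorem FiniteAdeleRing.exists_nonZeroDivisor_smul_mem_range (a : FiniteAdeleRing R K) :
    ∃ b : R⁰, b • a ∈ LinearMap.range (finiteIntegralAdelesInclusion R K).toLinearMap := by
  have hfin : {v : HeightOneSpectrum R | a v ∉ v.adicCompletionIntegers K}.Finite :=
    Filter.eventually_cofinite.mp a.2
  choose b hb hab using fun v : HeightOneSpectrum R =>
    HeightOneSpectrum.adicCompletion.mul_nonZeroDivisor_mem_adicCompletionIntegers v (a v)
  let p : R := ∏ v ∈ hfin.toFinset, b v
  have hR_integral (v : HeightOneSpectrum R) (r : R) :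
      algebraMap R (v.adicCompletion K) r ∈ v.adicCompletionIntegers K :=
    (algebraMap R (v.adicCompletionIntegers K) r).2
  have hmem (v : HeightOneSpectrum R) :
      a v * algebraMap R (v.adicCompletion K) p ∈ v.adicCompletionIntegers K := by
    by_cases hv : v ∈ hfin.toFinset
    · obtain ⟨c, hc⟩ : b v ∣ p := Finset.dvd_prod_of_mem b hv
      rw [hc, map_mul, ← mul_assoc]
      exact mul_mem (hab v) (hR_integral v c)
    · rw [hfin.mem_toFinset, Set.mem_ofPred, not_not] at hv
      exact mul_mem hv (hR_integral v p)
  refine ⟨⟨p, prod_mem fun v _ => hb v⟩, fun v => ⟨_, hmem v⟩, ?_⟩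
  ext v
  exact mul_comm _ _

theorem isBaseChange_finiteIntegralAdelesInclusion :
    IsBaseChange K (finiteIntegralAdelesInclusion R K).toLinearMap :=
  have := IsLocalizedModule.of_injective_of_exists_smul_mem_range R⁰ K _
    (finiteIntegralAdelesInclusion_injective R K)
    FiniteAdeleRing.exists_nonZeroDivisor_smul_mem_range
  IsLocalizedModule.isBaseChange R⁰ K _

end

theorem finiteAdeleRing_baseChange_bijective_general
    (R K : Type*) [CommRing R] [IsDedekindDomain R]
    [Field K] [Algebra R K] [IsFractionRing R K] :
    Function.Bijective
      (Algebra.TensorProduct.lift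
        (Algebra.ofId K (FiniteAdeleRing R K))
        (finiteIntegralAdelesInclusion R K)
        (fun _ _ => Commute.all _ _)) := by
  convert (isBaseChange_finiteIntegralAdelesInclusion R K).equiv.bijective using 1
  funext x
  induction x using TensorProduct.induction_on with
  | zero => simp
  | tmul k c => simp [Algebra.smul_def]
  | add x y hx hy => simp only [map_add, hx, hy]

/-- Let `R` be a Dedekind domain which is not a field, with fraction field
`K`.  Then the canonical `K`-algebra homomorphism `K ⊗[R] (∏_v O_v) → 𝔸_{R,K}`, induced by
the diagonal embedding `K → 𝔸_{R,K}` and the inclusion `∏_v O_v → 𝔸_{R,K}` (where `v` runs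
over the height-one primes of `R`), is an isomorphism. -/
theorem finiteAdeleRing_baseChange_bijective
    (R K : Type*) [CommRing R] [IsDedekindDomain R] (hRfield : ¬ IsField R)
    [Field K] [Algebra R K] [IsFractionRing R K] :
    Function.Bijective
      (Algebra.TensorProduct.lift
        (Algebra.ofId K (FiniteAdeleRing R K))
        (finiteIntegralAdelesInclusion R K)
        (fun _ _ => Commute.all _ _)) :=
  finiteAdeleRing_baseChange_bijective_general R K
end

section
/- Let R be a commutative ring and let P be a finite set of pairwise distinct minimal prime ideals of R (for instance, for R Noetherian of finite Krull dimension n, the set of all primes 𝔭 with dim R/𝔭 = n). Then the multiplication map (∏_{𝔭∈P} R_𝔭) ⊗_R (∏_{𝔭∈P} R_𝔭) → ∏_{𝔭∈P} R_𝔭 is an isomorphism of R-algebras. (This is the affine form of the isomorphism A(n) ⊗_𝒪 A(n) → A(n) of Beilinson adele rings, where A(n) is the product of the local rings at the dimension-n points.) -/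
/-- The product `∏_{𝔭 ∈ P} R_𝔭` of the localizations of `R` at the primes in a finite set
`P` of prime ideals, as an `R`-algebra. -/
abbrev PiLocalization (R : Type*) [CommRing R] (P : Finset (Ideal R))
    (hP : ∀ p ∈ P, Ideal.IsPrime p) : Type _ :=
  ∀ p : {p : Ideal R // p ∈ P}, Localization (@Ideal.primeCompl R _ p.1 (hP p.1 p.2))



open TensorProduct

/-- The tensor product of localizations at two distinct minimal primes is the zero ring. -/
lemma subsingleton_tensor_localization_of_ne
    {R : Type*} [CommRing R] {p q : Ideal R}
    (hp : p ∈ minimalPrimes R) (hq : q ∈ minimalPrimes R) (hne : p ≠ q) :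
    Subsingleton (Localization (@Ideal.primeCompl R _ p hp.1.1) ⊗[R]
      Localization (@Ideal.primeCompl R _ q hq.1.1)) := by
  haveI : p.IsPrime := hp.1.1
  haveI : q.IsPrime := hq.1.1
  by_contra h
  rw [not_subsingleton_iff_nontrivial] at h
  obtain ⟨m, hm⟩ := Ideal.exists_maximal
    (Localization p.primeCompl ⊗[R] Localization q.primeCompl)
  haveI := hm.isPrime
  set f := algebraMap R (Localization p.primeCompl ⊗[R] Localization q.primeCompl) with hf
  have hrprime : (m.comap f).IsPrime := Ideal.IsPrime.comap f
  have hrp : m.comap f ≤ p := by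
    intro x hx
    by_contra hxp
    have hu : IsUnit (algebraMap R (Localization p.primeCompl) x) :=
      IsLocalization.map_units (M := p.primeCompl) (Localization p.primeCompl) ⟨x, hxp⟩
    have : IsUnit (f x) := by
      rw [hf, Algebra.TensorProduct.algebraMap_apply]
      exact hu.map (Algebra.TensorProduct.includeLeft (S := R)).toRingHom
    exact hm.ne_top (Ideal.eq_top_of_isUnit_mem m hx this)
  have hrq : m.comap f ≤ q := by
    intro x hx
    by_contra hxq
    have hu : IsUnit (algebraMap R (Localization q.primeCompl) x) :=
      IsLocalization.map_units (M := q.primeCompl) (Localization q.primeCompl) ⟨x, hxq⟩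
    have : IsUnit (f x) := by
      rw [hf, Algebra.TensorProduct.algebraMap_apply']
      exact hu.map (Algebra.TensorProduct.includeRight (R := R)).toRingHom
    exact hm.ne_top (Ideal.eq_top_of_isUnit_mem m hx this)
  have h1 : p ≤ m.comap f := hp.2 ⟨hrprime, bot_le⟩ hrp
  have h2 : q ≤ m.comap f := hq.2 ⟨hrprime, bot_le⟩ hrq
  exact hne (le_antisymm (h1.trans hrq) (h2.trans hrp))

/-- `x ⊗ 1 = 1 ⊗ x` in `R_p ⊗[R] R_p`. -/
lemma tmul_one_eq_one_tmul_localization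
    {R : Type*} [CommRing R] (S : Submonoid R) (x : Localization S) :
    x ⊗ₜ[R] (1 : Localization S) = (1 : Localization S) ⊗ₜ[R] x := by
  haveI := IsLocalization.tensorProduct_compatibleSMul S (Localization S)
    (Localization S) (Localization S)
  calc x ⊗ₜ[R] (1 : Localization S) = (x • 1) ⊗ₜ[R] (1 : Localization S) := by
        rw [smul_eq_mul, mul_one]
    _ = (1 : Localization S) ⊗ₜ[R] (x • 1) := TensorProduct.smul_tmul x 1 1
    _ = (1 : Localization S) ⊗ₜ[R] x := by rw [smul_eq_mul, mul_one]


/-- Let `R` be a commutative ring and `P` a finite set of (pairwise distinct)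
minimal prime ideals of `R`.  Then the multiplication map
`(∏_{𝔭∈P} R_𝔭) ⊗_R (∏_{𝔭∈P} R_𝔭) → ∏_{𝔭∈P} R_𝔭` is an isomorphism of `R`-modules
(hence of `R`-algebras). -/
theorem mul'_piLocalization_bijective
    (R : Type*) [CommRing R] (P : Finset (Ideal R))
    (hP : ∀ p ∈ P, p ∈ minimalPrimes R) :
    Function.Bijective
      (LinearMap.mul' R (PiLocalization R P (fun p hp => (hP p hp).1.1))) := by
  classical
  set B := PiLocalization R P (fun p hp => (hP p hp).1.1) with hB
  have key : ∀ b : B, b ⊗ₜ[R] (1 : B) = (1 : B) ⊗ₜ[R] b := by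
    intro b
    apply (TensorProduct.piRight R R B
      (fun p : {p : Ideal R // p ∈ P} =>
        Localization (@Ideal.primeCompl R _ p.1 ((hP p.1 p.2).1.1)))).injective
    funext q
    simp only [TensorProduct.piRight_apply, TensorProduct.piRightHom_tmul, Pi.one_apply]
    apply (TensorProduct.comm R B _).injective
    apply (TensorProduct.piRight R R _
      (fun p : {p : Ideal R // p ∈ P} =>
        Localization (@Ideal.primeCompl R _ p.1 ((hP p.1 p.2).1.1)))).injective
    funext p
    simp only [TensorProduct.piRight_apply, TensorProduct.piRightHom_tmul, Pi.one_apply]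
    by_cases hpq : p = q
    · subst hpq
      exact (tmul_one_eq_one_tmul_localization _ (b p)).symm
    · haveI := subsingleton_tensor_localization_of_ne (hP q.1 q.2) (hP p.1 p.2)
        (fun h => hpq (Subtype.ext h.symm))
      exact Subsingleton.elim _ _
  have hright : ∀ x : B ⊗[R] B, (LinearMap.mul' R B x) ⊗ₜ[R] (1 : B) = x := by
    intro x
    induction x using TensorProduct.induction_on with
    | zero => simp
    | tmul a b =>
        rw [LinearMap.mul'_apply]
        calc (a * b) ⊗ₜ[R] (1 : B) = (a ⊗ₜ[R] (1 : B)) * (b ⊗ₜ[R] (1 : B)) := by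
              rw [Algebra.TensorProduct.tmul_mul_tmul, mul_one]
          _ = (a ⊗ₜ[R] (1 : B)) * ((1 : B) ⊗ₜ[R] b) := by rw [key b]
          _ = a ⊗ₜ[R] b := by rw [Algebra.TensorProduct.tmul_mul_tmul, mul_one, one_mul]
    | add x y hx hy => rw [map_add, add_tmul, hx, hy]
  constructor
  · intro x y hxy
    rw [← hright x, ← hright y, hxy]
  · intro b
    exact ⟨b ⊗ₜ[R] (1 : B), by rw [LinearMap.mul'_apply, mul_one]⟩
end
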